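/- Let σ > 0, R > 0, and let n ≥ 1 be a natural number. For ȳ ∈ ℝ set a(ȳ) = −√n(R+ȳ)/σ and b(ȳ) = √n(R−ȳ)/σ. Then ∫_ℝ (1/(2R)) · (σ²/n) · [ (Φ(b(ȳ)) − Φ(a(ȳ))) − (b(ȳ)φ(b(ȳ)) − a(ȳ)φ(a(ȳ))) − (φ(b(ȳ)) − φ(a(ȳ)))²/(Φ(b(ȳ)) − Φ(a(ȳ))) ] dȳ ≥ (σ²/n) · (1 − 4σ/(√n·R)). -/

import Mathlib

/-!
Write `s = σ / √n`, so that `a ȳ = -(R + ȳ) / s`, `b ȳ = (R - ȳ) / s` and the integrand is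
`s² / (2R)` times `V ȳ = Z · Var`, the variance of the standard normal truncated to
`[a ȳ, b ȳ]` weighted by its mass `Z = Φ b - Φ a`; it suffices to show `∫ V ≥ 2R - 8s`.

Being a variance, `0 ≤ V ≤ ∫_a^b t² φ`, and the latter is a sliding-window integral of an
integrable function, hence integrable in `ȳ`; so it is enough to integrate over `[-R, R]`.
There `a ≤ 0 ≤ b`, and when `s ≤ R` the window contains `[0, 1]` or `[-1, 0]`, so that
`Z ≥ φ 1`; with the tail bound `1 - Φ x ≤ 2 φ x` this gives
`V ≥ 1 - (4 - a) φ a - (4 + b) φ b`. After substituting `x = (R ± ȳ) / s`, each error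
term integrates to at most `s ∫_0^∞ (4 + x) φ x dx ≤ 4s`. When `R ≤ 4s` the bound is
nonpositive.
-/

open MeasureTheory

/-- The standard normal density. -/
noncomputable def gaussPdf (x : ℝ) : ℝ :=
  (Real.sqrt (2 * Real.pi))⁻¹ * Real.exp (-(x ^ 2) / 2)

/-- The standard normal CDF. -/
noncomputable def gaussCdf (x : ℝ) : ℝ :=
  ∫ t in Set.Iic x, gaussPdf t

open Real Set ProbabilityTheory

lemma MeasureTheory.Integrable.integrable_setIntegral_Ioc_add {g : ℝ → ℝ}
    (hg : Integrable g) (c d : ℝ) : Integrable fun x => ∫ t in Ioc (x + c) (x + d), g t := by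
  have hind : Integrable ((Ico (-d) (-c)).indicator fun _ => (1 : ℝ)) :=
    (integrable_indicator_iff measurableSet_Ico).2 (integrableOn_const measure_Ico_lt_top.ne)
  refine (hg.integrable_convolution (ContinuousLinearMap.lsmul ℝ ℝ) hind).congr
    (Filter.Eventually.of_forall fun x => ?_)
  have hmem (t : ℝ) : x - t ∈ Ico (-d) (-c) ↔ t ∈ Ioc (x + c) (x + d) := by
    simp only [mem_Ico, mem_Ioc]; constructor <;> rintro ⟨h1, h2⟩ <;> constructor <;> linarith
  simp only [convolution_def, ← integral_indicator measurableSet_Ioc, indicator_apply, hmem]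
  congr 1; ext t; split_ifs <;> simp

lemma gaussPdf_eq_gaussianPDFReal : gaussPdf = gaussianPDFReal 0 1 := by
  ext x; simp [gaussPdf, gaussianPDFReal]

lemma gaussPdf_pos (x : ℝ) : 0 < gaussPdf x := by
  unfold gaussPdf; positivity

@[fun_prop]
lemma continuous_gaussPdf : Continuous gaussPdf := by
  unfold gaussPdf; fun_prop

lemma integrable_gaussPdf : Integrable gaussPdf := by
  rw [gaussPdf_eq_gaussianPDFReal]; exact integrable_gaussianPDFReal 0 1

lemma integral_gaussPdf : ∫ x, gaussPdf x = 1 := by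
  rw [gaussPdf_eq_gaussianPDFReal]; exact integral_gaussianPDFReal_eq_one 0 one_ne_zero

lemma gaussPdf_neg (x : ℝ) : gaussPdf (-x) = gaussPdf x := by
  simp [gaussPdf]

lemma gaussPdf_le_of_abs_le {x y : ℝ} (h : |x| ≤ |y|) : gaussPdf y ≤ gaussPdf x := by
  have : x ^ 2 ≤ y ^ 2 := sq_le_sq.2 h
  unfold gaussPdf
  exact mul_le_mul_of_nonneg_left (exp_le_exp.2 (by linarith)) (by positivity)

lemma gaussPdf_le_gaussPdf_zero (x : ℝ) : gaussPdf x ≤ gaussPdf 0 :=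
  gaussPdf_le_of_abs_le (by simp)

lemma gaussPdf_zero_le_one : gaussPdf 0 ≤ 1 := by
  have : 1 ≤ √(2 * π) := Real.one_le_sqrt.2 (by linarith [pi_gt_three])
  simpa [gaussPdf] using inv_le_one_of_one_le₀ this

lemma gaussPdf_zero_le_two_mul_gaussPdf_one : gaussPdf 0 ≤ 2 * gaussPdf 1 := by
  have h : exp (1 / 2) ≤ 2 := by
    rw [← le_log_iff_exp_le two_pos]; linarith [log_two_gt_d9]
  have : gaussPdf 0 = exp (1 / 2) * gaussPdf 1 := by
    simp only [gaussPdf, mul_left_comm (exp (1 / 2)), ← exp_add]; norm_num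
  rw [this]
  exact mul_le_mul_of_nonneg_right h (gaussPdf_pos 1).le

lemma hasDerivAt_gaussPdf (x : ℝ) : HasDerivAt gaussPdf (-x * gaussPdf x) x := by
  have h : HasDerivAt (fun u : ℝ => -(u ^ 2) / 2) (-x) x :=
    ((hasDerivAt_pow 2 x).neg.div_const 2).congr_deriv (by norm_num; ring)
  exact (h.exp.const_mul _).congr_deriv (by simp only [gaussPdf]; ring)

lemma integral_mul_gaussPdf (a b : ℝ) :
    ∫ t in a..b, t * gaussPdf t = gaussPdf a - gaussPdf b := by
  rw [intervalIntegral.integral_eq_sub_of_hasDerivAt (f := fun t => -gaussPdf t)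
    (f' := fun t => t * gaussPdf t)
    (fun t _ => (hasDerivAt_gaussPdf t).neg.congr_deriv (by ring))
    ((continuous_id.mul continuous_gaussPdf).intervalIntegrable a b)]
  ring

lemma integral_sq_mul_gaussPdf (a b : ℝ) :
    ∫ t in a..b, t ^ 2 * gaussPdf t
      = (∫ t in a..b, gaussPdf t) + a * gaussPdf a - b * gaussPdf b := by
  have hderiv (t : ℝ) : HasDerivAt (fun u => -(u * gaussPdf u))
      (t ^ 2 * gaussPdf t - gaussPdf t) t :=
    ((hasDerivAt_id t).mul (hasDerivAt_gaussPdf t)).neg.congr_deriv (by simp only [id]; ring)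
  have hsq : IntervalIntegrable (fun t => t ^ 2 * gaussPdf t) volume a b :=
    ((continuous_pow 2).mul continuous_gaussPdf).intervalIntegrable a b
  have := intervalIntegral.integral_eq_sub_of_hasDerivAt (fun t _ => hderiv t)
    (hsq.sub (continuous_gaussPdf.intervalIntegrable a b))
  rw [intervalIntegral.integral_sub hsq (continuous_gaussPdf.intervalIntegrable a b)] at this
  linarith

lemma integral_sq_sub_mul_gaussPdf (a b c : ℝ) :
    ∫ t in a..b, (t - c) ^ 2 * gaussPdf t
      = (∫ t in a..b, t ^ 2 * gaussPdf t) - 2 * c * (∫ t in a..b, t * gaussPdf t)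
        + c ^ 2 * ∫ t in a..b, gaussPdf t := by
  have hint (k : ℕ) : IntervalIntegrable (fun t => t ^ k * gaussPdf t) volume a b :=
    ((continuous_pow k).mul continuous_gaussPdf).intervalIntegrable a b
  have hexp : (fun t => (t - c) ^ 2 * gaussPdf t) = fun t =>
      t ^ 2 * gaussPdf t - 2 * c * (t ^ 1 * gaussPdf t) + c ^ 2 * (t ^ 0 * gaussPdf t) := by
    ext t; ring
  rw [hexp, intervalIntegral.integral_add ((hint 2).sub ((hint 1).const_mul _))
    ((hint 0).const_mul _), intervalIntegral.integral_sub (hint 2) ((hint 1).const_mul _),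
    intervalIntegral.integral_const_mul, intervalIntegral.integral_const_mul]
  simp

lemma integrable_sq_mul_gaussPdf : Integrable fun t => t ^ 2 * gaussPdf t := by
  have := (integrable_rpow_mul_exp_neg_mul_sq (b := 1 / 2) (by norm_num) (s := 2)
    (by norm_num)).const_mul (√(2 * π))⁻¹
  refine this.congr (Filter.Eventually.of_forall fun t => ?_)
  simp only [gaussPdf, rpow_two]; ring_nf

lemma integral_Ioi_zero_gaussPdf : ∫ t in Ioi 0, gaussPdf t = 1 / 2 := by
  have h := integral_gaussian_Ioi (1 / 2)
  have e : ∀ t : ℝ, gaussPdf t = (√(2 * π))⁻¹ * exp (-(1 / 2) * t ^ 2) := fun t => by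
    simp only [gaussPdf]; ring_nf
  simp only [e, integral_const_mul, h, show π / (1 / 2) = 2 * π by ring]
  field_simp [(sqrt_pos.2 (by positivity : (0:ℝ) < 2 * π)).ne']

lemma gaussPdf_add_le {x u : ℝ} (hx : 0 ≤ x) (hu : 0 ≤ u) :
    gaussPdf (u + x) ≤ √(2 * π) * gaussPdf x * gaussPdf u := by
  have hpos : 0 < √(2 * π) := sqrt_pos.2 (by positivity)
  have : exp (-(u + x) ^ 2 / 2) ≤ exp (-x ^ 2 / 2) * exp (-u ^ 2 / 2) := by
    rw [← exp_add]; exact exp_le_exp.2 (by nlinarith)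
  simp only [gaussPdf]
  field_simp
  simpa only [neg_div] using this

lemma gaussCdf_sub (a b : ℝ) : gaussCdf b - gaussCdf a = ∫ t in a..b, gaussPdf t :=
  intervalIntegral.integral_Iic_sub_Iic integrable_gaussPdf.integrableOn
    integrable_gaussPdf.integrableOn

lemma one_sub_gaussCdf (x : ℝ) : 1 - gaussCdf x = ∫ t in Ioi x, gaussPdf t := by
  rw [← integral_gaussPdf, ← intervalIntegral.integral_Iic_add_Ioi (b := x)
    integrable_gaussPdf.integrableOn integrable_gaussPdf.integrableOn, gaussCdf]
  ring

lemma gaussCdf_neg (x : ℝ) : gaussCdf (-x) = 1 - gaussCdf x := by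
  rw [one_sub_gaussCdf, gaussCdf, ← integral_comp_neg_Ioi]
  simp only [gaussPdf_neg]

@[fun_prop]
lemma continuous_gaussCdf : Continuous gaussCdf := by
  have h : gaussCdf = fun x => gaussCdf 0 + ∫ t in (0:ℝ)..x, gaussPdf t := by
    ext x; rw [← gaussCdf_sub]; ring
  rw [h]
  exact continuous_const.add
    (intervalIntegral.continuous_primitive
      (fun a b => continuous_gaussPdf.intervalIntegrable a b) 0)

lemma one_sub_gaussCdf_le {x : ℝ} (hx : 0 ≤ x) : 1 - gaussCdf x ≤ 2 * gaussPdf x := by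
  have hpi : √(2 * π) ≤ 4 := by
    rw [sqrt_le_left (by norm_num)]; nlinarith [pi_lt_four]
  have shift : ∫ t in Ioi x, gaussPdf t = ∫ u in Ioi 0, gaussPdf (u + x) := by
    rw [← (measurePreserving_add_right volume x).setIntegral_preimage_emb
      (measurableEmbedding_addRight x), preimage_add_const_Ioi, sub_self]
  calc 1 - gaussCdf x = ∫ u in Ioi 0, gaussPdf (u + x) := by rw [one_sub_gaussCdf, shift]
    _ ≤ ∫ u in Ioi 0, √(2 * π) * gaussPdf x * gaussPdf u :=
        setIntegral_mono_on (integrable_gaussPdf.comp_add_right x).integrableOn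
          (integrable_gaussPdf.const_mul _).integrableOn measurableSet_Ioi
          fun u hu => gaussPdf_add_le hx (le_of_lt hu)
    _ = √(2 * π) * gaussPdf x / 2 := by
        rw [integral_const_mul, integral_Ioi_zero_gaussPdf]; ring
    _ ≤ 2 * gaussPdf x := by nlinarith [gaussPdf_pos x]

/-- `(Φ b − Φ a)` times the variance of the standard normal truncated to `[a, b]`. -/
noncomputable def truncCentralMoment (a b : ℝ) : ℝ :=
  (gaussCdf b - gaussCdf a) - (b * gaussPdf b - a * gaussPdf a)
    - (gaussPdf b - gaussPdf a) ^ 2 / (gaussCdf b - gaussCdf a)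

lemma truncCentralMoment_eq (a b : ℝ) :
    truncCentralMoment a b = (∫ t in a..b, t ^ 2 * gaussPdf t)
      - (∫ t in a..b, t * gaussPdf t) ^ 2 / ∫ t in a..b, gaussPdf t := by
  rw [truncCentralMoment, integral_sq_mul_gaussPdf, integral_mul_gaussPdf, gaussCdf_sub]
  ring

lemma integral_gaussPdf_pos {a b : ℝ} (hab : a < b) : 0 < ∫ t in a..b, gaussPdf t :=
  intervalIntegral.intervalIntegral_pos_of_pos_on (continuous_gaussPdf.intervalIntegrable a b)
    (fun x _ => gaussPdf_pos x) hab

lemma truncCentralMoment_nonneg {a b : ℝ} (hab : a < b) : 0 ≤ truncCentralMoment a b := by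
  rw [truncCentralMoment_eq]
  set Z := ∫ t in a..b, gaussPdf t with hZ
  set M := ∫ t in a..b, t * gaussPdf t with hM
  have hZpos : 0 < Z := integral_gaussPdf_pos hab
  have hvar : 0 ≤ ∫ t in a..b, (t - M / Z) ^ 2 * gaussPdf t :=
    intervalIntegral.integral_nonneg hab.le fun t _ => by have := gaussPdf_pos t; positivity
  rw [integral_sq_sub_mul_gaussPdf, ← hZ, ← hM] at hvar
  convert hvar using 1
  field_simp
  ring

lemma truncCentralMoment_le {a b : ℝ} (hab : a ≤ b) :
    truncCentralMoment a b ≤ ∫ t in a..b, t ^ 2 * gaussPdf t := by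
  have hZ : 0 ≤ ∫ t in a..b, gaussPdf t :=
    intervalIntegral.integral_nonneg hab fun t _ => (gaussPdf_pos t).le
  rw [truncCentralMoment_eq]
  linarith [div_nonneg (sq_nonneg (∫ t in a..b, t * gaussPdf t)) hZ]

lemma gaussPdf_one_le_integral {a b : ℝ} (ha : a ≤ 0) (hb : 0 ≤ b)
    (h1 : a ≤ -1 ∨ 1 ≤ b) : gaussPdf 1 ≤ ∫ t in a..b, gaussPdf t := by
  obtain ⟨c, hc, hac, hcb⟩ : ∃ c, c ∈ Icc (-1 : ℝ) 0 ∧ a ≤ c ∧ c + 1 ≤ b := by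
    rcases h1 with h | h
    · exact ⟨-1, by norm_num, h, by linarith⟩
    · exact ⟨0, by norm_num, ha, by linarith⟩
  calc gaussPdf 1 = ∫ _ in c..c + 1, gaussPdf 1 := by simp
    _ ≤ ∫ t in c..c + 1, gaussPdf t :=
        intervalIntegral.integral_mono_on (by linarith) intervalIntegrable_const
          (continuous_gaussPdf.intervalIntegrable _ _) fun t ht =>
            gaussPdf_le_of_abs_le (by
              rw [abs_one]; exact abs_le.2 ⟨by linarith [ht.1, hc.1], by linarith [ht.2, hc.2]⟩)
    _ ≤ ∫ t in a..b, gaussPdf t :=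
        intervalIntegral.integral_mono_interval hac (by linarith) hcb
          (Filter.Eventually.of_forall fun t => (gaussPdf_pos t).le)
          (continuous_gaussPdf.intervalIntegrable _ _)

lemma one_sub_le_truncCentralMoment {a b : ℝ} (ha : a ≤ 0) (hb : 0 ≤ b)
    (h1 : a ≤ -1 ∨ 1 ≤ b) :
    1 - (4 - a) * gaussPdf a - (4 + b) * gaussPdf b ≤ truncCentralMoment a b := by
  set Z := gaussCdf b - gaussCdf a
  have hZ : 1 - 2 * gaussPdf a - 2 * gaussPdf b ≤ Z := by
    have hlo := one_sub_gaussCdf_le (neg_nonneg.2 ha)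
    rw [← gaussCdf_neg, neg_neg, gaussPdf_neg] at hlo
    linarith [one_sub_gaussCdf_le hb]
  have hZ0 : gaussPdf 0 ≤ 2 * Z := by
    have := gaussPdf_one_le_integral ha hb h1
    rw [← gaussCdf_sub] at this
    linarith [gaussPdf_zero_le_two_mul_gaussPdf_one]
  have hM : (gaussPdf b - gaussPdf a) ^ 2 ≤ gaussPdf 0 * (gaussPdf a + gaussPdf b) := by
    nlinarith [gaussPdf_pos a, gaussPdf_pos b, gaussPdf_le_gaussPdf_zero a,
      gaussPdf_le_gaussPdf_zero b]
  have hratio : (gaussPdf b - gaussPdf a) ^ 2 / Z ≤ 2 * (gaussPdf a + gaussPdf b) := by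
    have hZpos : 0 < Z := by linarith [gaussPdf_pos 0]
    rw [div_le_iff₀ hZpos]
    nlinarith [gaussPdf_pos a, gaussPdf_pos b]
  rw [truncCentralMoment]
  linarith

lemma Continuous.truncCentralMoment {f g : ℝ → ℝ} (hf : Continuous f) (hg : Continuous g)
    (hfg : ∀ y, f y < g y) : Continuous fun y => truncCentralMoment (f y) (g y) := by
  have hZ : Continuous fun y => gaussCdf (g y) - gaussCdf (f y) := by fun_prop
  refine Continuous.sub (by fun_prop) (Continuous.div (by fun_prop) hZ fun y => ?_)
  rw [gaussCdf_sub]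
  exact (integral_gaussPdf_pos (hfg y)).ne'

lemma integral_four_add_mul_gaussPdf_le {L : ℝ} (hL : 0 ≤ L) :
    ∫ x in 0..L, (4 + x) * gaussPdf x ≤ 4 := by
  have hhalf : ∫ x in 0..L, gaussPdf x ≤ 1 / 2 := by
    rw [intervalIntegral.integral_of_le hL, ← integral_Ioi_zero_gaussPdf]
    exact setIntegral_mono_set integrable_gaussPdf.integrableOn
      (Filter.Eventually.of_forall fun t => (gaussPdf_pos t).le) Ioc_subset_Ioi_self.eventuallyLE
  have hsplit : ∫ x in 0..L, (4 + x) * gaussPdf x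
      = 4 * (∫ x in 0..L, gaussPdf x) + ∫ x in 0..L, x * gaussPdf x := by
    simp only [add_mul]
    rw [intervalIntegral.integral_add, intervalIntegral.integral_const_mul]
    · exact (continuous_const.mul continuous_gaussPdf).intervalIntegrable _ _
    · exact (continuous_id.mul continuous_gaussPdf).intervalIntegrable _ _
  rw [hsplit, integral_mul_gaussPdf]
  linarith [gaussPdf_zero_le_one, gaussPdf_pos L]

section Window

variable {s R : ℝ}

lemma neg_add_div_lt_sub_div (hs : 0 < s) (hR : 0 < R) (y : ℝ) :
    -((R + y) / s) < (R - y) / s := by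
  rw [neg_lt_iff_pos_add, ← add_div]
  exact div_pos (by linarith) hs

lemma integrable_truncCentralMoment_window (hs : 0 < s) (hR : 0 < R) :
    Integrable fun y => truncCentralMoment (-((R + y) / s)) ((R - y) / s) := by
  have hab := neg_add_div_lt_sub_div hs hR
  have hdom : Integrable fun y =>
      ∫ t in Ioc (y / -s + -(R / s)) (y / -s + R / s), t ^ 2 * gaussPdf t :=
    (integrable_sq_mul_gaussPdf.integrable_setIntegral_Ioc_add _ _).comp_div (neg_ne_zero.2 hs.ne')
  refine hdom.mono'
    (Continuous.truncCentralMoment (by fun_prop) (by fun_prop) hab).aestronglyMeasurable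
    (Filter.Eventually.of_forall fun y => ?_)
  rw [Real.norm_of_nonneg (truncCentralMoment_nonneg (hab y))]
  convert truncCentralMoment_le (hab y).le using 1
  rw [intervalIntegral.integral_of_le (hab y).le]
  congr 2
  rw [div_neg]
  congr 1 <;> ring

lemma two_mul_sub_le_integral_truncCentralMoment_window (hs : 0 < s) (hsR : s ≤ R) :
    2 * R - 8 * s ≤ ∫ y in -R..R, truncCentralMoment (-((R + y) / s)) ((R - y) / s) := by
  have hR : 0 < R := hs.trans_le hsR
  set g : ℝ → ℝ := fun x => (4 + x) * gaussPdf x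
  have hpoint : ∀ y ∈ Icc (-R) R, 1 - g ((R + y) / s) - g ((R - y) / s)
      ≤ truncCentralMoment (-((R + y) / s)) ((R - y) / s) := by
    intro y hy
    have h1 : -((R + y) / s) ≤ -1 ∨ 1 ≤ (R - y) / s := by
      rcases le_total y 0 with h | h
      · exact Or.inr ((one_le_div hs).2 (by linarith))
      · exact Or.inl (neg_le_neg ((one_le_div hs).2 (by linarith)))
    have := one_sub_le_truncCentralMoment (neg_nonpos.2 (div_nonneg (by linarith [hy.1]) hs.le))
      (div_nonneg (by linarith [hy.2]) hs.le) h1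
    simpa only [g, gaussPdf_neg, sub_neg_eq_add] using this
  have hL : 0 ≤ 2 * R / s := by positivity
  have hleft : ∫ y in -R..R, g ((R + y) / s) = s * ∫ x in 0..2 * R / s, g x := by
    simp only [add_div]
    rw [intervalIntegral.integral_comp_add_div g hs.ne', smul_eq_mul]
    congr 2 <;> ring
  have hright : ∫ y in -R..R, g ((R - y) / s) = s * ∫ x in 0..2 * R / s, g x := by
    simp only [sub_div]
    rw [intervalIntegral.integral_comp_sub_div g hs.ne', smul_eq_mul]
    congr 2 <;> ring
  have hint (f : ℝ → ℝ) (hf : Continuous f) : IntervalIntegrable f volume (-R) R :=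
    hf.intervalIntegrable _ _
  calc 2 * R - 8 * s
        ≤ 2 * R - s * (∫ x in 0..2 * R / s, g x) - s * ∫ x in 0..2 * R / s, g x := by
        nlinarith [integral_four_add_mul_gaussPdf_le hL]
    _ = ∫ y in -R..R, (1 - g ((R + y) / s) - g ((R - y) / s)) := by
        rw [intervalIntegral.integral_sub (hint _ (by fun_prop)) (hint _ (by fun_prop)),
          intervalIntegral.integral_sub (hint _ (by fun_prop)) (hint _ (by fun_prop)),
          hleft, hright]
        simp only [intervalIntegral.integral_const, smul_eq_mul]
        ring
    _ ≤ _ := intervalIntegral.integral_mono_on (by linarith) (hint _ (by fun_prop))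
          (hint _ (Continuous.truncCentralMoment (by fun_prop) (by fun_prop)
            (neg_add_div_lt_sub_div hs hR))) hpoint

lemma two_mul_sub_le_integral_truncCentralMoment (hs : 0 < s) (hR : 0 < R) :
    2 * R - 8 * s ≤ ∫ y, truncCentralMoment (-((R + y) / s)) ((R - y) / s) := by
  have hnonneg (y : ℝ) : 0 ≤ truncCentralMoment (-((R + y) / s)) ((R - y) / s) :=
    truncCentralMoment_nonneg (neg_add_div_lt_sub_div hs hR y)
  rcases le_total R (4 * s) with hRs | hsR
  · exact le_trans (by linarith) (integral_nonneg hnonneg)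
  calc 2 * R - 8 * s
      ≤ ∫ y in -R..R, truncCentralMoment (-((R + y) / s)) ((R - y) / s) :=
        two_mul_sub_le_integral_truncCentralMoment_window hs (by linarith)
    _ ≤ _ := by
        rw [intervalIntegral.integral_of_le (by linarith)]
        exact setIntegral_le_integral (integrable_truncCentralMoment_window hs hR)
          (Filter.Eventually.of_forall hnonneg)

end Window

/-- The expected variance of a truncated normal posterior with location `ȳ`,
scale `σ²/n` and domain `[−R, R]`, where `ȳ` has density `(1/(2R))(Φ(b(ȳ)) − Φ(a(ȳ)))`,
is at least `(σ²/n)(1 − 4σ/(√n R))`. -/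
theorem expected_truncated_posterior_variance_ge
    (σ R : ℝ) (hσ : 0 < σ) (hR : 0 < R) (n : ℕ) (hn : 1 ≤ n)
    (a b : ℝ → ℝ)
    (ha : ∀ ybar, a ybar = -(Real.sqrt n * (R + ybar) / σ))
    (hb : ∀ ybar, b ybar = Real.sqrt n * (R - ybar) / σ) :
    (σ ^ 2 / n) * (1 - 4 * σ / (Real.sqrt n * R)) ≤
      ∫ ybar : ℝ,
        (1 / (2 * R)) * (σ ^ 2 / n) *
          ((gaussCdf (b ybar) - gaussCdf (a ybar))
            - (b ybar * gaussPdf (b ybar) - a ybar * gaussPdf (a ybar))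
            - (gaussPdf (b ybar) - gaussPdf (a ybar)) ^ 2 /
                (gaussCdf (b ybar) - gaussCdf (a ybar))) := by
  have hsqrt : 0 < √(n : ℝ) := Real.sqrt_pos.2 (by exact_mod_cast hn)
  obtain ⟨s, hs_def⟩ : ∃ s, s = σ / √(n : ℝ) := ⟨_, rfl⟩
  have hs : 0 < s := hs_def ▸ div_pos hσ hsqrt
  have hintegrand : (fun y => (1 / (2 * R)) * (σ ^ 2 / n) *
      ((gaussCdf (b y) - gaussCdf (a y)) - (b y * gaussPdf (b y) - a y * gaussPdf (a y))
        - (gaussPdf (b y) - gaussPdf (a y)) ^ 2 / (gaussCdf (b y) - gaussCdf (a y))))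
      = fun y => (1 / (2 * R)) * (σ ^ 2 / n) *
          truncCentralMoment (-((R + y) / s)) ((R - y) / s) := by
    ext y
    rw [truncCentralMoment, ha, hb, hs_def]
    field_simp
  rw [hintegrand, integral_const_mul]
  calc (σ ^ 2 / n) * (1 - 4 * σ / (√n * R))
        = 1 / (2 * R) * (σ ^ 2 / n) * (2 * R - 8 * s) := by
        rw [hs_def]; field_simp; ring
    _ ≤ _ := mul_le_mul_of_nonneg_left (two_mul_sub_le_integral_truncCentralMoment hs hR)
        (by positivity)
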